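/- Let θ₀ = inf{θ ∈ (0, π/2) : ∂N_θ ∩ Cat = ∅}, where Cat = {x ∈ ℝ³ : cosh²(x₃) = x₁² + x₂²} and ∂N_θ = {x ∈ ℝ³ : x₃² = |x|²·sin²θ}. Then 0 < θ₀ < π/4, the cone ∂N_{θ₀} intersects Cat, and for every θ with θ₀ < θ < π/2 the cone ∂N_θ is disjoint from Cat. -/

import Mathlib

open Real Set

abbrev R3 := EuclideanSpace ℝ (Fin 3)

/-- The standard vertical catenoid centered at the origin. -/
def Cat : Set R3 := {x | Real.cosh (x 2) ^ 2 = x 0 ^ 2 + x 1 ^ 2}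

/-- The double cone `∂N_θ` of angle `θ` about the horizontal plane through the origin. -/
def coneBdry (θ : ℝ) : Set R3 := {x | (x 2) ^ 2 = ‖x‖ ^ 2 * Real.sin θ ^ 2}

/-- The critical angle: the infimum of angles `θ ∈ (0, π/2)` for which the cone
`∂N_θ` is disjoint from the catenoid. -/
noncomputable def θ₀ : ℝ := sInf {θ | θ ∈ Ioo 0 (π / 2) ∧ coneBdry θ ∩ Cat = ∅}

/-!
A point of the catenoid at height `t` sits at distance `cosh t` from the axis, so it lies on
`∂N_θ` exactly when `tan θ = ± t / cosh t`. The odd function `t ↦ t / cosh t` is continuous and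
tends to `0` at `±∞`, hence its range is `[-M, M]` for its maximum `M`, with `0 < M < 1` because
`0 < t < cosh t` for `t > 0`. So for `θ ∈ (0, π/2)` the cone misses the catenoid iff
`M < tan θ`, i.e. the set defining `θ₀` is `(arctan M, π/2)` and `θ₀ = arctan M < arctan 1 = π/4`.
-/

theorem Real.quadratic_lt_two_mul_cosh_of_nonneg {t : ℝ} (ht : 0 ≤ t) :
    1 + t + t ^ 2 / 2 < 2 * cosh t := by
  have := quadratic_le_exp_of_nonneg ht
  have := exp_pos (-t)
  rw [cosh_eq]
  linarith

theorem Real.cosh_one_lt_two : cosh 1 < 2 := by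
  have := exp_one_lt_d9
  have : exp (-1) < 1 := exp_lt_one_iff.2 (by norm_num)
  rw [cosh_eq]
  linarith

theorem Real.self_lt_cosh (t : ℝ) : t < cosh t := by
  rcases le_or_gt t 0 with ht | ht
  · exact ht.trans_lt (cosh_pos t)
  · nlinarith [quadratic_lt_two_mul_cosh_of_nonneg ht.le]

/-- The slope `t / cosh t`, seen from the origin, of the point `(cosh t, 0, t)` of the meridian
of the catenoid. -/
noncomputable def meridianSlope (t : ℝ) : ℝ := t / cosh t

theorem continuous_meridianSlope : Continuous meridianSlope :=
  continuous_id.div continuous_cosh fun t => (cosh_pos t).ne'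

theorem meridianSlope_neg (t : ℝ) : meridianSlope (-t) = -meridianSlope t := by
  simp only [meridianSlope, cosh_neg, neg_div]

theorem meridianSlope_lt_one (t : ℝ) : meridianSlope t < 1 :=
  (div_lt_one (cosh_pos t)).2 (self_lt_cosh t)

theorem half_lt_meridianSlope_one : 1 / 2 < meridianSlope 1 := by
  rw [meridianSlope, div_lt_div_iff₀ two_pos (cosh_pos 1)]
  linarith [cosh_one_lt_two]

theorem meridianSlope_le_half {t : ℝ} (ht : 6 ≤ t) : meridianSlope t ≤ 1 / 2 := by
  rw [meridianSlope, div_le_div_iff₀ (cosh_pos t) two_pos]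
  nlinarith [quadratic_lt_two_mul_cosh_of_nonneg (by linarith : (0 : ℝ) ≤ t)]

theorem exists_forall_meridianSlope_le : ∃ t₀, ∀ t, meridianSlope t ≤ meridianSlope t₀ := by
  refine continuous_meridianSlope.exists_forall_ge' 1 ?_
  rw [cocompact_eq_atBot_atTop, Filter.eventually_sup]
  have hone := half_lt_meridianSlope_one
  constructor
  · filter_upwards [Filter.eventually_le_atBot 0] with t ht
    have : meridianSlope t ≤ 0 := div_nonpos_of_nonpos_of_nonneg ht (cosh_pos t).le
    linarith
  · filter_upwards [Filter.eventually_ge_atTop 6] with t ht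
    linarith [meridianSlope_le_half ht]

theorem range_eq_Icc_of_odd {f : ℝ → ℝ} (hf : Continuous f) (hodd : ∀ t, f (-t) = -f t)
    {t₀ : ℝ} (hmax : ∀ t, f t ≤ f t₀) : range f = Icc (-f t₀) (f t₀) := by
  refine Subset.antisymm ?_ ?_
  · rintro _ ⟨t, rfl⟩
    exact ⟨by linarith [hmax (-t), hodd t], hmax t⟩
  · simpa only [hodd] using intermediate_value_univ (-t₀) t₀ hf

theorem tan_eq_meridianSlope_iff {θ : ℝ} (hθ : cos θ ≠ 0) (s : ℝ) :
    meridianSlope s = tan θ ↔ s * cos θ = cosh s * sin θ := by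
  rw [meridianSlope, tan_eq_sin_div_cos, div_eq_div_iff (cosh_pos s).ne' hθ, mul_comm (cosh s)]

theorem mem_coneBdry_iff_of_mem_Cat {x : R3} (hx : x ∈ Cat) (θ : ℝ) :
    x ∈ coneBdry θ ↔ (x 2 * cos θ) ^ 2 = (cosh (x 2) * sin θ) ^ 2 := by
  have hnorm : ‖x‖ ^ 2 = cosh (x 2) ^ 2 + x 2 ^ 2 := by
    rw [EuclideanSpace.real_norm_sq_eq, Fin.sum_univ_three, hx.out]
  change x 2 ^ 2 = ‖x‖ ^ 2 * sin θ ^ 2 ↔ _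
  rw [hnorm]
  constructor <;> intro h
  · linear_combination h + x 2 ^ 2 * sin_sq_add_cos_sq θ
  · linear_combination h - x 2 ^ 2 * sin_sq_add_cos_sq θ

theorem coneBdry_inter_Cat_nonempty_iff {θ : ℝ} (hθ : cos θ ≠ 0) :
    (coneBdry θ ∩ Cat).Nonempty ↔ tan θ ∈ range meridianSlope := by
  simp only [mem_range, tan_eq_meridianSlope_iff hθ]
  constructor
  · rintro ⟨x, hcone, hcat⟩
    rcases sq_eq_sq_iff_eq_or_eq_neg.1 ((mem_coneBdry_iff_of_mem_Cat hcat θ).1 hcone) with h | h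
    · exact ⟨x 2, h⟩
    · exact ⟨-x 2, by rw [cosh_neg]; linarith⟩
  · rintro ⟨s, hs⟩
    have hcat : !₂[cosh s, 0, s] ∈ Cat := by simp [Cat]
    refine ⟨_, (mem_coneBdry_iff_of_mem_Cat hcat θ).2 ?_, hcat⟩
    simpa using congrArg (· ^ 2) hs

theorem setOf_coneBdry_inter_Cat_eq_empty {M : ℝ} (hM : 0 ≤ M)
    (hrange : range meridianSlope = Icc (-M) M) :
    {θ | θ ∈ Ioo 0 (π / 2) ∧ coneBdry θ ∩ Cat = ∅} = Ioo (arctan M) (π / 2) := by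
  have hempty_iff {θ : ℝ} (h0 : 0 < θ) (hπ : θ < π / 2) : coneBdry θ ∩ Cat = ∅ ↔ arctan M < θ := by
    have hcos : cos θ ≠ 0 := (cos_pos_of_mem_Ioo ⟨by linarith [pi_pos], hπ⟩).ne'
    have htan : 0 < tan θ := tan_pos_of_pos_of_lt_pi_div_two h0 hπ
    have hlt : M < tan θ ↔ arctan M < θ := by
      rw [← arctan_lt_arctan_iff, arctan_tan (by linarith [pi_pos]) hπ]
    rw [← not_nonempty_iff_eq_empty, coneBdry_inter_Cat_nonempty_iff hcos, hrange, mem_Icc,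
      ← hlt]
    constructor
    · intro h
      by_contra hle
      exact h ⟨by linarith, not_lt.1 hle⟩
    · intro h hmem
      linarith [hmem.2]
  ext θ
  constructor
  · rintro ⟨⟨h0, hπ⟩, hempty⟩
    exact ⟨(hempty_iff h0 hπ).1 hempty, hπ⟩
  · rintro ⟨hM', hπ⟩
    have h0 : 0 < θ := (arctan_nonneg.2 hM).trans_lt hM'
    exact ⟨⟨h0, hπ⟩, (hempty_iff h0 hπ).2 hM'⟩

theorem stmt1 :
    0 < θ₀ ∧ θ₀ < π / 4 ∧ (coneBdry θ₀ ∩ Cat).Nonempty ∧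
      ∀ θ : ℝ, θ₀ < θ → θ < π / 2 → coneBdry θ ∩ Cat = ∅ := by
  obtain ⟨t₀, hmax⟩ := exists_forall_meridianSlope_le
  set M := meridianSlope t₀
  have hrange : range meridianSlope = Icc (-M) M :=
    range_eq_Icc_of_odd continuous_meridianSlope meridianSlope_neg hmax
  have hM : 0 < M := by linarith [hmax 1, half_lt_meridianSlope_one]
  have hset := setOf_coneBdry_inter_Cat_eq_empty hM.le hrange
  have hθ₀ : θ₀ = arctan M := by rw [θ₀, hset, csInf_Ioo (arctan_lt_pi_div_two M)]
  have hcos : cos θ₀ ≠ 0 := by rw [hθ₀]; exact (cos_arctan_pos M).ne'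
  refine ⟨hθ₀ ▸ arctan_pos.2 hM, ?_, ?_, ?_⟩
  · rw [hθ₀, ← arctan_one]
    exact arctan_strictMono (meridianSlope_lt_one t₀)
  · rw [coneBdry_inter_Cat_nonempty_iff hcos, hθ₀, tan_arctan, hrange]
    exact right_mem_Icc.2 (by linarith)
  · intro θ hθ hπ
    have hθ' : θ ∈ Ioo (arctan M) (π / 2) := ⟨hθ₀ ▸ hθ, hπ⟩
    rw [← hset] at hθ'
    exact hθ'.2
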